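/- For sl_2, every monomial m appearing in the q-character χ_q(W_{k,a}) = m_{k,a}(1 + A_{aq^{2k-1}}^{-1}(1 + A_{aq^{2k-3}}^{-1}(1+···(1+A_{aq}^{-1})···))) with m ≠ m_{k,a} satisfies m ≤ m_{k,a} A_{aq^{2k-1}}^{-1}, i.e. m_{k,a} A_{aq^{2k-1}}^{-1} m^{-1} is a product of the monomials A_b; in particular m is right-negative and hence not dominant. -/

import Mathlib

/-! Expanding the nested product, the monomials of `χ_q(W_{k,a})` are
`m_j = m_{k,a} A_{aq^{2k-1}}⁻¹ ⋯ A_{aq^{2j+1}}⁻¹` for `0 ≤ j ≤ k`. Since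
`A_{aq^{2i+1}} = Y_{aq^{2i}} Y_{aq^{2i+2}}`, this telescopes to
`m_j = Y_a ⋯ Y_{aq^{2j-2}} (Y_{aq^{2j+2}} ⋯ Y_{aq^{2k}})⁻¹`. For `j < k` the variable `Y_{aq^{2k}}`
has exponent `-1` and lies to the right of every variable with positive exponent, which gives
right-negativity and non-dominance. -/

noncomputable section

/-- Laurent monomials in the variables `Y_b`, `b ∈ ℂˣ`, written additively:
a monomial is its finitely supported exponent function. -/
abbrev Mon : Type := ℂˣ →₀ ℤ

/-- The Laurent polynomial ring `ℤ[Y_b^±]`. -/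
abbrev Rng : Type := AddMonoidAlgebra ℤ Mon

/-- The variable `Y_b` as a monomial. -/
def Y (b : ℂˣ) : Mon := Finsupp.single b 1

/-- A monomial viewed as an element of the Laurent polynomial ring. -/
def X (m : Mon) : Rng := AddMonoidAlgebra.single m 1

/-- The monomial `A_b = Y_{bq⁻¹} Y_{bq}` (sl₂ case). -/
def Amon (q b : ℂˣ) : Mon := Y (b * q⁻¹) + Y (b * q)

/-- The highest weight monomial `m_{k,a} = Y_a Y_{aq²} ⋯ Y_{aq^{2(k-1)}}`. -/
def mka (q : ℂˣ) (k : ℕ) (a : ℂˣ) : Mon := ∑ s ∈ Finset.range k, Y (a * q ^ (2 * s))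

/-- The normalized q-character of the sl₂ Kirillov-Reshetikhin module, given by the
nested formula `1 + A_{aq^{2k-1}}⁻¹(1 + A_{aq^{2k-3}}⁻¹(1 + ⋯ (1 + A_{aq}⁻¹)⋯))`. -/
def Nchi (q : ℂˣ) : ℕ → ℂˣ → Rng
  | 0, _ => 1
  | (k+1), a => 1 + X (-(Amon q (a * q ^ (2 * k + 1)))) * Nchi q k a

/-- The q-character `χ_q(W_{k,a}) = m_{k,a}(1 + A_{aq^{2k-1}}⁻¹(1 + ⋯ (1 + A_{aq}⁻¹)⋯))`. -/
def chiW (q : ℂˣ) (k : ℕ) (a : ℂˣ) : Rng := X (mka q k a) * Nchi q k a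

/-- A monomial `m ≠ 1` is right-negative if for each `a`, at the maximal `q`-power shift
`L` where `m` is supported on `a q^L`, the exponent is negative. -/
def RightNeg (q : ℂˣ) (m : Mon) : Prop :=
  m ≠ 0 ∧ ∀ (a : ℂˣ) (L : ℤ), m (a * q ^ L) ≠ 0 →
    (∀ l : ℤ, L < l → m (a * q ^ l) = 0) → m (a * q ^ L) < 0

/-- A monomial is dominant if all its exponents are nonnegative. -/
def Dominant (m : Mon) : Prop := ∀ b, 0 ≤ m b

open Finset

lemma X_add (m n : Mon) : X (m + n) = X m * X n := by
  simp [X, AddMonoidAlgebra.single_mul_single]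

lemma X_zero : X (0 : Mon) = 1 := rfl

/-- `m_{k,a} A_{aq^{2k-1}}⁻¹ A_{aq^{2k-3}}⁻¹ ⋯ A_{aq^{2j+1}}⁻¹` -/
def lowerMon (q : ℂˣ) (k : ℕ) (a : ℂˣ) (j : ℕ) : Mon :=
  mka q k a - ∑ i ∈ Ico j k, Amon q (a * q ^ (2 * i + 1))

lemma lowerMon_self (q : ℂˣ) (k : ℕ) (a : ℂˣ) : lowerMon q k a k = mka q k a := by
  simp [lowerMon]

lemma Nchi_eq_sum (q : ℂˣ) (k : ℕ) (a : ℂˣ) :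
    Nchi q k a = ∑ j ∈ range (k + 1), X (-∑ i ∈ Ico j k, Amon q (a * q ^ (2 * i + 1))) := by
  induction k with
  | zero => simp [Nchi, X_zero]
  | succ k ih =>
    rw [Nchi, ih, mul_sum, sum_range_succ _ (k + 1), Ico_self, sum_empty, neg_zero, X_zero,
      add_comm]
    refine congrArg (· + 1) (sum_congr rfl fun j hj => ?_)
    rw [← X_add, sum_Ico_succ_top (mem_range_succ_iff.mp hj), neg_add, add_comm]

lemma chiW_eq_sum (q : ℂˣ) (k : ℕ) (a : ℂˣ) :
    chiW q k a = ∑ j ∈ range (k + 1), X (lowerMon q k a j) := by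
  simp only [chiW, Nchi_eq_sum, mul_sum, ← X_add, lowerMon, sub_eq_add_neg]

lemma support_chiW_subset (q : ℂˣ) (k : ℕ) (a : ℂˣ) :
    (chiW q k a).coeff.support ⊆ (range (k + 1)).image (lowerMon q k a) := by
  rw [chiW_eq_sum, AddMonoidAlgebra.coeff_sum]
  refine (Finsupp.support_finsetSum).trans fun m hm => ?_
  obtain ⟨j, hj, hm⟩ := mem_biUnion.mp hm
  exact mem_image.mpr ⟨j, hj, (List.mem_singleton.mp (Finsupp.support_single_subset hm)).symm⟩

lemma Amon_eq_add (q a : ℂˣ) (i : ℕ) :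
    Amon q (a * q ^ (2 * i + 1)) = Y (a * q ^ (2 * i)) + Y (a * q ^ (2 * (i + 1))) := by
  rw [Amon, pow_succ, mul_assoc, mul_inv_cancel_right, mul_add_one 2 i, pow_succ, pow_succ,
    mul_assoc]

lemma lowerMon_eq (q a : ℂˣ) {k j : ℕ} (hj : j ≤ k) :
    lowerMon q k a j =
      ∑ s ∈ range j, Y (a * q ^ (2 * s)) - ∑ s ∈ Ioc j k, Y (a * q ^ (2 * s)) := by
  have hmka : mka q k a = ∑ s ∈ range j, Y (a * q ^ (2 * s)) + ∑ s ∈ Ico j k, Y (a * q ^ (2 * s)) :=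
    (sum_range_add_sum_Ico _ hj).symm
  have hA : ∑ i ∈ Ico j k, Amon q (a * q ^ (2 * i + 1)) =
      ∑ s ∈ Ico j k, Y (a * q ^ (2 * s)) + ∑ s ∈ Ioc j k, Y (a * q ^ (2 * s)) := by
    rw [sum_congr rfl fun i _ => Amon_eq_add q a i, sum_add_distrib,
      sum_Ico_add' (fun s => Y (a * q ^ (2 * s))), Ico_add_one_add_one_eq_Ioc]
  rw [lowerMon, hmka, hA]
  abel

lemma mka_sub_Amon_top (q a : ℂˣ) {k j : ℕ} (hj : j < k) :
    mka q k a - Amon q (a * q ^ (2 * (k : ℤ) - 1)) =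
      lowerMon q k a j + ∑ i ∈ Ico j (k - 1), Amon q (a * q ^ (2 * i + 1)) := by
  obtain ⟨n, rfl⟩ : ∃ n, k = n + 1 := ⟨k - 1, by omega⟩
  have htop : q ^ (2 * ((n + 1 : ℕ) : ℤ) - 1) = q ^ (2 * n + 1) := by
    rw [← zpow_natCast]; push_cast; ring_nf
  rw [htop, lowerMon, sum_Ico_succ_top (by omega), Nat.add_sub_cancel]
  abel

lemma rightNeg_of_forall_pos (q : ℂˣ) {m : Mon} (hm : m ≠ 0)
    (hpos : ∀ c, 0 < m c → ∃ n : ℤ, 0 < n ∧ m (c * q ^ n) ≠ 0) : RightNeg q m := by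
  refine ⟨hm, fun b L hL hmax => lt_of_not_ge fun hge => ?_⟩
  obtain ⟨n, hn, hne⟩ := hpos _ (lt_of_le_of_ne hge (Ne.symm hL))
  rw [mul_assoc, ← zpow_add] at hne
  exact hne (hmax _ (by omega))

lemma exists_eq_of_lowerMon_apply_pos (q a : ℂˣ) {k j : ℕ} (hj : j ≤ k) {c : ℂˣ}
    (hc : 0 < lowerMon q k a j c) : ∃ s < j, c = a * q ^ (2 * s) := by
  rw [lowerMon_eq q a hj, Finsupp.sub_apply] at hc
  have hnonneg : 0 ≤ (∑ s ∈ Ioc j k, Y (a * q ^ (2 * s))) c :=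
    Finsupp.finsetSum_apply (Ioc j k) (fun s => Y (a * q ^ (2 * s))) c ▸ sum_nonneg fun s _ => by
      rw [Y, Finsupp.single_apply]; split <;> omega
  have hne : (∑ s ∈ range j, Y (a * q ^ (2 * s))) c ≠ 0 := by omega
  rw [Finsupp.finsetSum_apply] at hne
  obtain ⟨s, hs, hYs⟩ := exists_ne_zero_of_sum_ne_zero hne
  exact ⟨s, mem_range.mp hs, (Finsupp.single_apply_ne_zero.mp hYs).1⟩

section Evaluation

variable {q : ℂˣ} (hq : ¬IsOfFinOrder q) (a : ℂˣ)
include hq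

lemma sum_Y_apply (S : Finset ℕ) (n : ℕ) :
    (∑ s ∈ S, Y (a * q ^ (2 * s))) (a * q ^ (2 * n)) = if n ∈ S then 1 else 0 := by
  have hinj : ∀ s, a * q ^ (2 * s) = a * q ^ (2 * n) ↔ s = n := fun s => by
    rw [mul_right_inj, (injective_pow_iff_not_isOfFinOrder.mpr hq).eq_iff]; omega
  simp only [Finsupp.finsetSum_apply, Y, Finsupp.single_apply, hinj, sum_ite_eq']

lemma lowerMon_apply_top {k j : ℕ} (hj : j < k) : lowerMon q k a j (a * q ^ (2 * k)) = -1 := by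
  rw [lowerMon_eq q a hj.le, Finsupp.sub_apply, sum_Y_apply hq, sum_Y_apply hq]
  simp [hj, hj.le]

lemma not_dominant_lowerMon {k j : ℕ} (hj : j < k) : ¬Dominant (lowerMon q k a j) :=
  fun hdom => (hdom _).not_gt (by rw [lowerMon_apply_top hq a hj]; norm_num)

lemma rightNeg_lowerMon {k j : ℕ} (hj : j < k) : RightNeg q (lowerMon q k a j) := by
  have htop := lowerMon_apply_top hq a hj
  refine rightNeg_of_forall_pos q (fun h => by simp [h] at htop) fun c hc => ?_
  obtain ⟨s, hs, rfl⟩ := exists_eq_of_lowerMon_apply_pos q a hj.le hc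
  refine ⟨2 * (k - s : ℤ), by omega, ?_⟩
  rw [mul_assoc, ← zpow_natCast, ← zpow_add,
    show ((2 * s : ℕ) : ℤ) + 2 * (k - s) = (2 * k : ℕ) by push_cast; ring, zpow_natCast, htop]
  norm_num

end Evaluation

theorem kr_sl2_lower_monomials_general (q : ℂˣ) (hq : ∀ n : ℤ, n ≠ 0 → q ^ n ≠ 1)
    (k : ℕ) (a : ℂˣ) :
    ∀ m ∈ (chiW q k a).coeff.support, m ≠ mka q k a →
      (∃ s : Multiset ℂˣ,
        mka q k a - Amon q (a * q ^ (2 * (k : ℤ) - 1)) = m + (s.map (Amon q)).sum) ∧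
      RightNeg q m ∧ ¬ Dominant m := by
  intro m hm hne
  have hq_inf : ¬IsOfFinOrder q := isOfFinOrder_iff_zpow_eq_one.not.mpr fun ⟨n, hn, h⟩ => hq n hn h
  obtain ⟨j, hj, rfl⟩ := mem_image.mp (support_chiW_subset q k a hm)
  have hjk : j < k := (mem_range_succ_iff.mp hj).lt_of_ne fun h => hne (h ▸ lowerMon_self q k a)
  refine ⟨⟨(Ico j (k - 1)).val.map fun i => a * q ^ (2 * i + 1), ?_⟩,
    rightNeg_lowerMon hq_inf a hjk, not_dominant_lowerMon hq_inf a hjk⟩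
  rw [mka_sub_Amon_top q a hjk, Multiset.map_map]
  rfl

/-- for sl₂, every monomial `m ≠ m_{k,a}` of `χ_q(W_{k,a})` satisfies
`m ≤ m_{k,a} A_{aq^{2k-1}}⁻¹` (i.e. `m_{k,a} A_{aq^{2k-1}}⁻¹ m⁻¹` is a product of `A_b`'s);
in particular `m` is right-negative and not dominant. -/
theorem kr_sl2_lower_monomials (q : ℂˣ) (hq : ∀ n : ℤ, n ≠ 0 → q ^ n ≠ 1)
    (k : ℕ) (hk : 1 ≤ k) (a : ℂˣ) :
    ∀ m ∈ (chiW q k a).coeff.support, m ≠ mka q k a →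
      (∃ s : Multiset ℂˣ,
        mka q k a - Amon q (a * q ^ (2 * (k : ℤ) - 1)) = m + (s.map (Amon q)).sum) ∧
      RightNeg q m ∧ ¬ Dominant m :=
  kr_sl2_lower_monomials_general q hq k a
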